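/- Let A be a Noetherian local ring with maximal ideal m and residue field k = A/m, and let p be a prime ideal of A such that A/p is regular and A is normally flat along p. Then the graded k-algebra G_p(A) ⊗_{A/p} k and the graded k(p)-algebra G(A_p) (the associated graded ring of the localization A_p with respect to its maximal ideal pA_p) have the same Hilbert function: dim_k (p^n/p^{n+1} ⊗_{A/p} k) = dim_{k(p)} ((pA_p)^n/(pA_p)^{n+1}) for all n ≥ 0. -/

import Mathlib

open IsLocalRing Polynomial

set_option synthInstance.maxHeartbeats 1000000
set_option maxHeartbeats 1000000

section HilbertSamuel

variable (R : Type*) [CommRing R] (I : Ideal R)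

/-- The Hilbert function of the ring `R` with respect to the ideal `I`:
`n ↦ dim_{R/I} (Iⁿ/Iⁿ⁺¹)`. -/
noncomputable def hilbertFn (n : ℕ) : ℕ :=
  Module.finrank (R ⧸ I) ((↥(I ^ n)) ⧸ (I • (⊤ : Submodule R ↥(I ^ n))))

/-- Forward difference operator on integer sequences. -/
def intDiff (f : ℕ → ℤ) : ℕ → ℤ := fun n => f (n + 1) - f n

/-- The Hilbert–Samuel multiplicity of `R` with respect to `I` (intended for the case
where `I` is the maximal ideal of a local ring `R`): the `d`-th finite difference
(`d = dim R`) of the Hilbert–Samuel function `n ↦ length (R / Iⁿ⁺¹) = ∑_{i ≤ n} dim Iⁱ/Iⁱ⁺¹`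
is eventually constant, with value the multiplicity. -/
noncomputable def hsMultiplicity : ℕ :=
  sInf {e : ℕ | ∀ᶠ n in Filter.atTop,
    (intDiff^[(ENat.toNat (WithBot.unbotD 0 (ringKrullDim R)))]
      (fun m => ((Finset.range (m + 1)).sum fun i => (hilbertFn R I i : ℤ)))) n = (e : ℤ)}

/-- The multiplicity `e(A)` of a local ring `A`. -/
noncomputable abbrev multiplicity' (A : Type*) [CommRing A] [IsLocalRing A] : ℕ :=
  hsMultiplicity A (maximalIdeal A)

/-- The embedding dimension of a local ring. -/
noncomputable abbrev embDim (A : Type*) [CommRing A] [IsLocalRing A] : ℕ :=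
  hilbertFn A (maximalIdeal A) 1

end HilbertSamuel

section Henselization

universe u

/-- `B` (an `A`-algebra) is *the henselization* of the local ring `A`: it is a henselian
local ring, local and flat over `A`, with `𝔪_B = 𝔪_A B` and the same residue field,
which is universal among henselian local rings receiving a local homomorphism from `A`. -/
structure IsHenselization (A : Type u) (B : Type u) [CommRing A] [IsLocalRing A]
    [CommRing B] [IsLocalRing B] [Algebra A B] : Prop where
  henselian : HenselianLocalRing B
  flat : Module.Flat A B
  isLocalHom : IsLocalHom (algebraMap A B)
  maximalIdeal_map :
    (maximalIdeal A).map (algebraMap A B) = maximalIdeal B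
  residue_surjective :
    ∀ b : B, ∃ a : A, b - algebraMap A B a ∈ maximalIdeal B
  universal : ∀ (C : Type u) [CommRing C] [IsLocalRing C], HenselianLocalRing C →
    ∀ (g : A →+* C), IsLocalHom g →
      ∃! h : B →+* C, IsLocalHom h ∧ h.comp (algebraMap A B) = g

/-- `B` (an `A`-algebra) is *a strict henselization* of the local ring `A`: a henselian
local ring, local and flat over `A`, with `𝔪_B = 𝔪_A B`, whose residue field is a
separable closure of that of `A` (it is separably closed, and every element of `B` is,
modulo `𝔪_B`, a root of a monic polynomial over `A` which is separable modulo `𝔪_A`),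
satisfying the existence part of the universal property of the strict henselization. -/
structure IsStrictHenselization (A : Type u) (B : Type u) [CommRing A] [IsLocalRing A]
    [CommRing B] [IsLocalRing B] [Algebra A B] : Prop where
  henselian : HenselianLocalRing B
  flat : Module.Flat A B
  isLocalHom : IsLocalHom (algebraMap A B)
  maximalIdeal_map :
    (maximalIdeal A).map (algebraMap A B) = maximalIdeal B
  sepClosed_residue : IsSepClosed (ResidueField B)
  residue_sepAlgebraic :
    ∀ b : B, ∃ p : Polynomial A, p.Monic ∧ (p.map (residue A)).Separable ∧
      Polynomial.aeval b p ∈ maximalIdeal B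
  universal : ∀ (C : Type u) [CommRing C] [IsLocalRing C], HenselianLocalRing C →
    IsSepClosed (ResidueField C) →
    ∀ (g : A →+* C), IsLocalHom g →
      ∃ h : B →+* C, IsLocalHom h ∧ h.comp (algebraMap A B) = g

end Henselization

section Normalization

variable (A : Type*) [CommRing A] [IsLocalRing A]

/-- The normalization of a (reduced) ring: the integral closure of `A` in its total
ring of fractions. -/
noncomputable abbrev Normalization : Type _ := ↥(integralClosure A (FractionRing A))

/-- The extension `𝔪 Ā` of the maximal ideal of `A` to the normalization `Ā`. -/
noncomputable def extendedMaximalIdeal : Ideal (Normalization A) :=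
  (maximalIdeal A).map (algebraMap A (Normalization A))

/-- The ring `Ā / 𝔪 Ā`.  The *branches* of `Spec A` at its closed point are the points of
its prime spectrum. -/
noncomputable abbrev BranchRing : Type _ := Normalization A ⧸ extendedMaximalIdeal A

noncomputable instance branchRingAlgebra : Algebra (ResidueField A) (BranchRing A) :=
  (Ideal.Quotient.lift (maximalIdeal A)
    ((Ideal.Quotient.mk (extendedMaximalIdeal A)).comp
      (algebraMap A (Normalization A)))
    (fun a ha => by
      exact Ideal.Quotient.eq_zero_iff_mem.mpr
        (Ideal.mem_map_of_mem (algebraMap A (Normalization A)) ha))).toAlgebra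
      (S := BranchRing A)

noncomputable instance branchRingModule : Module (ResidueField A) (BranchRing A) :=
  @Algebra.toModule _ _ _ _ (branchRingAlgebra A)

/-- The ring `(Ā / 𝔪 Ā) ⊗_{k(𝔪)} K`, where `K` is an algebraic closure of the residue
field `k(𝔪)`.  The *geometric branches* of `Spec A` at its closed point are the points of
its prime spectrum. -/
noncomputable abbrev GeomBranchRing : Type _ :=
  TensorProduct (ResidueField A) (AlgebraicClosure (ResidueField A)) (BranchRing A)

end Normalization

section AssociatedGraded

variable (R : Type*) [CommRing R] (I : Ideal R)

/-- The ideal `I · R[It]` of the Rees algebra `R[It]`. -/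
noncomputable def grIdeal : Ideal (reesAlgebra I) :=
  I.map (algebraMap R (reesAlgebra I))

/-- The associated graded ring `G_I(R) = ⊕ₙ Iⁿ/Iⁿ⁺¹`, realized as `R[It]/(I · R[It])`. -/
noncomputable abbrev GrRing : Type _ := reesAlgebra I ⧸ grIdeal R I

/-- `G_I(R)` is an algebra over `R/I`. -/
noncomputable instance grRingAlgebra : Algebra (R ⧸ I) (GrRing R I) :=
  (Ideal.Quotient.lift I
    ((Ideal.Quotient.mk (grIdeal R I)).comp (algebraMap R (reesAlgebra I)))
    (fun a ha => by
      exact Ideal.Quotient.eq_zero_iff_mem.mpr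
        (Ideal.mem_map_of_mem (algebraMap R (reesAlgebra I)) ha))).toAlgebra
      (S := GrRing R I)

noncomputable instance grRingModule : Module (R ⧸ I) (GrRing R I) :=
  @Algebra.toModule _ _ _ _ (grRingAlgebra R I)

/-- The image in `G_I(R)` of the degree `n` homogeneous component `Iⁿ/Iⁿ⁺¹`. -/
noncomputable def grDegSet (n : ℕ) : Set (GrRing R I) :=
  (Ideal.Quotient.mk (grIdeal R I)) ''
    {x : reesAlgebra I | ∃ a ∈ I ^ n, (x : Polynomial R) = Polynomial.monomial n a}

/-- The Hilbert function of the graded ring `G_I(R)`: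
the dimension over `R/I` of the degree `n` homogeneous component. -/
noncomputable def grHilbertFn (n : ℕ) : ℕ :=
  Module.finrank (R ⧸ I) ↥(Submodule.span (R ⧸ I) (grDegSet R I n))

/-- An ideal of the associated graded ring is *generated by linear forms* if it is
generated by a set of homogeneous elements of degree one.  The subvariety of the
(tangent) cone `Spec G_I(R)` it defines is a *linear variety*. -/
def IsGeneratedByLinearForms (q : Ideal (GrRing R I)) : Prop :=
  ∃ s ⊆ grDegSet R I 1, q = Ideal.span s

end AssociatedGraded

section GrLocal

variable (A : Type*) [CommRing A] [IsLocalRing A]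

/-- The associated graded ring `G(A) = ⊕ 𝔪ⁿ/𝔪ⁿ⁺¹` of a local ring, i.e. the coordinate
ring of the tangent cone of `Spec A` at its closed point. -/
noncomputable abbrev GrLocalRing : Type _ := GrRing A (maximalIdeal A)

noncomputable instance grLocalAlgebra : Algebra (ResidueField A) (GrLocalRing A) :=
  grRingAlgebra A (maximalIdeal A)

noncomputable instance grLocalModule : Module (ResidueField A) (GrLocalRing A) :=
  @Algebra.toModule _ _ _ _ (grLocalAlgebra A)

/-- The base change `G(A) ⊗_{k(𝔪)} K` of the associated graded ring of a local ring to the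
algebraic closure `K` of the residue field `k(𝔪)`. -/
noncomputable abbrev GrLocalRingBar : Type _ :=
  TensorProduct (ResidueField A) (AlgebraicClosure (ResidueField A)) (GrLocalRing A)

noncomputable instance grLocalBarAlgebra :
    Algebra (ResidueField A) (GrLocalRingBar A) :=
  Algebra.TensorProduct.leftAlgebra (R := ResidueField A)
    (A := AlgebraicClosure (ResidueField A)) (B := GrLocalRing A) (S := ResidueField A)

noncomputable instance grLocalBarAlgebraK :
    Algebra (AlgebraicClosure (ResidueField A)) (GrLocalRingBar A) :=
  Algebra.TensorProduct.leftAlgebra (R := ResidueField A)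
    (A := AlgebraicClosure (ResidueField A)) (B := GrLocalRing A)
    (S := AlgebraicClosure (ResidueField A))

/-- The image in `G(A) ⊗_{k(𝔪)} K` of the degree `n` homogeneous component. -/
noncomputable def grBarDegSet (n : ℕ) : Set (GrLocalRingBar A) :=
  (Algebra.TensorProduct.includeRight (R := ResidueField A)
      (A := AlgebraicClosure (ResidueField A)) (B := GrLocalRing A)) ''
    grDegSet A (maximalIdeal A) n

/-- The Hilbert function of `G(A) ⊗_{k(𝔪)} K`. -/
noncomputable def grBarHilbertFn (n : ℕ) : ℕ :=
  Module.finrank (AlgebraicClosure (ResidueField A))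
    ↥(Submodule.span (AlgebraicClosure (ResidueField A)) (grBarDegSet A n))

end GrLocal

section GrMap

variable {R : Type*} [CommRing R] {T : Type*} [CommRing T]

/-- A ring homomorphism `f : R → T` with `f I ⊆ J` induces a homomorphism of Rees
algebras `R[It] → T[Jt]`. -/
noncomputable def reesMap (f : R →+* T) (I : Ideal R) (J : Ideal T)
    (h : ∀ a ∈ I, f a ∈ J) : ↥(reesAlgebra I) →+* ↥(reesAlgebra J) :=
  RingHom.codRestrict
    ((Polynomial.mapRingHom f).comp (Subsemiring.subtype (reesAlgebra I).toSubsemiring))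
    (reesAlgebra J).toSubsemiring
    (by
      rintro ⟨x, hx⟩
      show Polynomial.map f x ∈ reesAlgebra J
      rw [mem_reesAlgebra_iff]
      intro i
      rw [Polynomial.coeff_map]
      have hxi : x.coeff i ∈ I ^ i := (mem_reesAlgebra_iff I x).mp hx i
      exact Ideal.pow_right_mono (Ideal.map_le_iff_le_comap.mpr h) i
        (Ideal.map_pow f I i ▸ Ideal.mem_map_of_mem f hxi))

/-- A ring homomorphism `f : R → T` with `f I ⊆ J` induces a homomorphism of associated
graded rings `G_I(R) → G_J(T)`. -/
noncomputable def grMap (f : R →+* T) (I : Ideal R) (J : Ideal T)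
    (h : ∀ a ∈ I, f a ∈ J) : GrRing R I →+* GrRing T J :=
  Ideal.Quotient.lift (grIdeal R I)
    ((Ideal.Quotient.mk (grIdeal T J)).comp (reesMap f I J h))
    (by
      intro x hx
      have hle : grIdeal R I ≤
          RingHom.ker ((Ideal.Quotient.mk (grIdeal T J)).comp (reesMap f I J h)) := by
        refine Ideal.map_le_iff_le_comap.mpr (fun a ha => ?_)
        rw [Ideal.mem_comap, RingHom.mem_ker, RingHom.comp_apply]
        have heq : reesMap f I J h (algebraMap R (reesAlgebra I) a)
            = algebraMap T (reesAlgebra J) (f a) := by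
          apply Subtype.ext
          show Polynomial.map f (Polynomial.C a) = Polynomial.C (f a)
          exact Polynomial.map_C f
        rw [heq, Ideal.Quotient.eq_zero_iff_mem]
        exact Ideal.mem_map_of_mem (algebraMap T (reesAlgebra J)) (h a ha)
      exact hle hx)

end GrMap

section MoreDefs

/-- A commutative ring is a *regular local ring* if it is a Noetherian local ring whose
Krull dimension equals its embedding dimension `dim_k 𝔪/𝔪²`. -/
def IsRegularLocalRing' (R : Type*) [CommRing R] : Prop :=
  IsLocalRing R ∧ IsNoetherianRing R ∧
    ∀ I : Ideal R, I.IsMaximal → ringKrullDim R = (hilbertFn R I 1 : WithBot ℕ∞)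

/-- Given a quotient-like `A`-algebra `B ⧸ P` of a (strict) henselization `B` of `A` (so
that `P` is a minimal prime corresponding to a branch `γ`), the *tangent cone, as a set,
to the branch `γ`* viewed inside the tangent cone `Spec G(A)` of `Spec A`: the radical of
the kernel of the induced homomorphism `G(A) → G(B/P)` of associated graded rings. -/
noncomputable def branchTangent (A : Type*) [CommRing A] [IsLocalRing A]
    (B : Type*) [CommRing B] [Algebra A B] (P : Ideal B) : Ideal (GrLocalRing A) :=
  (RingHom.ker
    (grMap ((Ideal.Quotient.mk P).comp (algebraMap A B)) (maximalIdeal A)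
      ((maximalIdeal A).map ((Ideal.Quotient.mk P).comp (algebraMap A B)))
      (fun _ ha => Ideal.mem_map_of_mem _ ha))).radical (R := GrLocalRing A)

/-- For a standard graded algebra `S` whose degree-one homogeneous elements form the set
`lin` (so that the irrelevant ideal is `span lin`), the scheme `Proj S` is reduced if and
only if every nilpotent of `S` is annihilated by a power of the irrelevant ideal. -/
def ProjIsReduced (S : Type*) [CommRing S] (lin : Set S) : Prop :=
  ∀ x : S, IsNilpotent x → ∃ n : ℕ, ∀ y ∈ (Ideal.span lin) ^ n, y * x = 0

/-- The closed point of the one-dimensional reduced affine scheme `Spec A` is *ordinary*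
if `Proj (G(A) ⊗_{k(𝔪)} K)` is reduced, `K` an algebraic closure of the residue field. -/
def OrdinaryClosedPoint (A : Type*) [CommRing A] [IsLocalRing A] : Prop :=
  @ProjIsReduced (GrLocalRingBar A)
    (Algebra.TensorProduct.instCommRing (R := ResidueField A)
      (A := AlgebraicClosure (ResidueField A)) (B := GrLocalRing A)) (grBarDegSet A 1)

/-- A closed point (with local ring `A`) of a variety is an *ordinary point* for the
multiplicity `e` if the tangent cone at it is, as a set, the union of `e` distinct linear
varieties, i.e. if `G(A)` has exactly `e` minimal primes, each generated by linear
forms. -/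
def OrdinaryPoint (A : Type*) [CommRing A] [IsLocalRing A] (e : ℕ) : Prop :=
  (minimalPrimes (GrLocalRing A)).ncard = e ∧
    ∀ q ∈ minimalPrimes (GrLocalRing A), IsGeneratedByLinearForms A (maximalIdeal A) q

/-- A (reduced) ring `A` is *seminormal* if it is seminormal in its normalization:
whenever `b` is an element of the integral closure of `A` in its total fraction ring with
`b² , b³ ∈ A`, already `b ∈ A`. -/
def IsSeminormal (A : Type*) [CommRing A] : Prop :=
  ∀ b : FractionRing A, b ∈ integralClosure A (FractionRing A) →
    b ^ 2 ∈ (algebraMap A (FractionRing A)).range →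
    b ^ 3 ∈ (algebraMap A (FractionRing A)).range →
    b ∈ (algebraMap A (FractionRing A)).range

end MoreDefs

section Deg1

/-- The degree-one element of the associated graded ring `G_I(R)` determined by an
element `z ∈ I` (i.e. the class of `z` in `I/I²`, viewed as a linear form on the cone
`Spec G_I(R)`). -/
noncomputable def grDeg1 {R : Type*} [CommRing R] (I : Ideal R) (z : R) (hz : z ∈ I) :
    GrRing R I :=
  Ideal.Quotient.mk (grIdeal R I)
    ⟨Polynomial.monomial 1 z, reesAlgebra.monomial_mem.mpr (by simpa using hz)⟩

end Deg1

/-!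
`(pA_p)ⁿ/(pA_p)ⁿ⁺¹` is the localization of `pⁿ/pⁿ⁺¹` at `p`; being killed by `pA_p`, it is
therefore the base change of `pⁿ/pⁿ⁺¹` along `A/p → k(p)`. Over the Noetherian local ring `A/p`
the finite flat module `pⁿ/pⁿ⁺¹` is free, and base change of a free module to either residue
field `k` or `k(p)` preserves its rank.
-/

open scoped TensorProduct

section BaseChange

variable {A S Q V : Type*} [CommRing A] [CommRing S] [Algebra A S] (I : Ideal A)
  [AddCommGroup Q] [Module A Q] [Module (A ⧸ I) Q] [IsScalarTower A (A ⧸ I) Q]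
  [AddCommGroup V] [Module A V] [Module S V] [IsScalarTower A S V]
  [Module (S ⧸ I.map (algebraMap A S)) V] [IsScalarTower S (S ⧸ I.map (algebraMap A S)) V]

theorem IsBaseChange.finrank_quotient_eq {g : Q →ₗ[A] V} (hg : IsBaseChange S g)
    (hI : I.map (algebraMap A S) ≠ ⊤) [Module.Free (A ⧸ I) Q] :
    Module.finrank (S ⧸ I.map (algebraMap A S)) V = Module.finrank (A ⧸ I) Q := by
  set k := S ⧸ I.map (algebraMap A S)
  have : TensorProduct.CompatibleSMul S k k V :=
    .of_algebraMap_surjective _ _ Ideal.Quotient.mk_surjective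
  have : TensorProduct.CompatibleSMul A (A ⧸ I) k Q :=
    .of_algebraMap_surjective _ _ Ideal.Quotient.mk_surjective
  let e : V ≃ₗ[k] k ⊗[A ⧸ I] Q :=
    (TensorProduct.lidOfCompatibleSMul S k V).symm ≪≫ₗ
    TensorProduct.AlgebraTensorModule.congr (.refl k k) hg.equiv.symm ≪≫ₗ
    TensorProduct.AlgebraTensorModule.cancelBaseChange A S k k Q ≪≫ₗ
    (TensorProduct.equivOfCompatibleSMul A (A ⧸ I) k k Q).symm
  have : Nontrivial k := Ideal.Quotient.nontrivial_iff.mpr hI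
  have : Nontrivial (A ⧸ I) := (algebraMap (A ⧸ I) k).domain_nontrivial
  rw [e.finrank_eq, Module.finrank_baseChange]

end BaseChange

section Localization

variable {A : Type*} (S : Type*) [CommRing A] [CommRing S] [Algebra A S]
  (W : Submonoid A) [IsLocalization W S]

theorem Ideal.exists_isLocalizedModule_map (I : Ideal A) :
    ∃ f : I →ₗ[A] I.map (algebraMap A S), IsLocalizedModule W f :=
  ⟨_, IsLocalizedModule.of_linearEquiv W (Submodule.toLocalized' S W (Algebra.linearMap A S) I)
    ((LinearEquiv.ofEq _ _ (Ideal.localized'_eq_map S W I)).restrictScalars A)⟩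

theorem exists_isLocalizedModule_quotient_smul_top {M N : Type*} [AddCommGroup M] [Module A M]
    [AddCommGroup N] [Module A N] [Module S N] [IsScalarTower A S N]
    (f : M →ₗ[A] N) [IsLocalizedModule W f] (I : Ideal A) :
    ∃ g : M ⧸ I • (⊤ : Submodule A M) →ₗ[A] N ⧸ I.map (algebraMap A S) • (⊤ : Submodule S N),
      IsLocalizedModule W g := by
  have h : (I • ⊤ : Submodule A M).localized' S W f = I.map (algebraMap A S) • ⊤ := by
    rw [Submodule.localized'_smul, Ideal.localized'_eq_map, Submodule.localized'_top]
  exact ⟨_, IsLocalizedModule.of_linearEquiv W (Submodule.toLocalizedQuotient' S W f _)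
    ((Submodule.quotEquivOfEq _ _ h).restrictScalars A)⟩

include W in
theorem hilbertFn_map_eq_finrank (I : Ideal A) (hI : I.map (algebraMap A S) ≠ ⊤) (n : ℕ)
    [Module.Free (A ⧸ I) (↥(I ^ n) ⧸ I • (⊤ : Submodule A ↥(I ^ n)))] :
    hilbertFn S (I.map (algebraMap A S)) n =
      Module.finrank (A ⧸ I) (↥(I ^ n) ⧸ I • (⊤ : Submodule A ↥(I ^ n))) := by
  obtain ⟨f, _⟩ : ∃ f : ↥(I ^ n) →ₗ[A] ↥(I.map (algebraMap A S) ^ n), IsLocalizedModule W f :=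
    Ideal.map_pow (algebraMap A S) I n ▸ Ideal.exists_isLocalizedModule_map S W (I ^ n)
  obtain ⟨g, hg⟩ := exists_isLocalizedModule_quotient_smul_top S W f I
  exact ((isLocalizedModule_iff_isBaseChange W S g).mp hg).finrank_quotient_eq I hI

end Localization

theorem hilbertFn_fiber_eq_hilbertFn_localization_general
    (A : Type*) [CommRing A] [IsLocalRing A] [IsNoetherianRing A]
    (p : Ideal A) [hp : p.IsPrime]
    (hflat : ∀ n : ℕ, Module.Flat (A ⧸ p) (↥(p ^ n) ⧸ (p • (⊤ : Submodule A ↥(p ^ n))))) :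
    letI : Algebra (A ⧸ p) (ResidueField A) :=
      (Ideal.Quotient.factor (S := p) (T := maximalIdeal A) (le_maximalIdeal hp.ne_top)).toAlgebra
    ∀ n : ℕ,
      Module.finrank (ResidueField A)
          (TensorProduct (A ⧸ p) (ResidueField A)
            (↥(p ^ n) ⧸ (p • (⊤ : Submodule A ↥(p ^ n))))) =
        hilbertFn (Localization.AtPrime p) (maximalIdeal (Localization.AtPrime p)) n := by
  let : Algebra (A ⧸ p) (ResidueField A) :=
    (Ideal.Quotient.factor (le_maximalIdeal hp.ne_top)).toAlgebra
  intro n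
  have : IsLocalRing (A ⧸ p) := .of_surjective' (Ideal.Quotient.mk p) Ideal.Quotient.mk_surjective
  have := hflat n
  have : Module.Finite (A ⧸ p) (↥(p ^ n) ⧸ p • (⊤ : Submodule A ↥(p ^ n))) :=
    .of_restrictScalars_finite A _ _
  have : Module.Free (A ⧸ p) (↥(p ^ n) ⧸ p • (⊤ : Submodule A ↥(p ^ n))) :=
    Module.free_of_flat_of_isLocalRing
  have hmax := Localization.AtPrime.map_eq_maximalIdeal (I := p)
  rw [← hmax,
    hilbertFn_map_eq_finrank _ p.primeCompl p (hmax ▸ (maximalIdeal.isMaximal _).ne_top)]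
  exact Module.finrank_baseChange

/-- Theorem 1.6(b). Let `A` be a Noetherian local ring with residue
field `k`, and `p` a prime of `A` such that `A/p` is regular and `A` is normally flat
along `p`.  Then the graded `k`-algebra `G_p(A) ⊗_{A/p} k` and the graded `k(p)`-algebra
`G(A_p)` have the same Hilbert function:
`dim_k (k ⊗_{A/p} pⁿ/pⁿ⁺¹) = dim_{k(p)} ((pA_p)ⁿ/(pA_p)ⁿ⁺¹)` for all `n`. -/
theorem hilbertFn_fiber_eq_hilbertFn_localization
    (A : Type*) [CommRing A] [IsLocalRing A] [IsNoetherianRing A]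
    (p : Ideal A) [hp : p.IsPrime]
    (hreg : IsRegularLocalRing' (A ⧸ p))
    (hflat : ∀ n : ℕ, Module.Flat (A ⧸ p) (↥(p ^ n) ⧸ (p • (⊤ : Submodule A ↥(p ^ n))))) :
    letI : Algebra (A ⧸ p) (ResidueField A) :=
      (Ideal.Quotient.factor (S := p) (T := maximalIdeal A) (le_maximalIdeal hp.ne_top)).toAlgebra
    ∀ n : ℕ,
      Module.finrank (ResidueField A)
          (TensorProduct (A ⧸ p) (ResidueField A)
            (↥(p ^ n) ⧸ (p • (⊤ : Submodule A ↥(p ^ n))))) =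
        hilbertFn (Localization.AtPrime p) (maximalIdeal (Localization.AtPrime p)) n :=
  hilbertFn_fiber_eq_hilbertFn_localization_general A p (hp := hp) hflat
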